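/- Let B be an integral base-polyhedron and let W̄(x) := Σ_{s∈S} φ̄(x(s)), where φ̄ is the piecewise-linear extension of k ↦ k² given by φ̄(ξ) = (2k+1)|ξ| − k(k+1) with k = ⌊|ξ|⌋. Then the minimum value of W̄ over B equals the minimum of the square-sum Σ_{s∈S} x(s)² over the integer points B ∩ ℤ^S; moreover, for any minimizer x_ℝ of W̄ over B, there exists an integral minimizer x_ℤ ∈ B ∩ ℤ^S of W̄ with ⌊x_ℝ⌋ ≤ x_ℤ ≤ ⌈x_ℝ⌉. -/

import Mathlib

open Finset

variable {α : Type*} [Fintype α] [DecidableEq α]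

def Supermodular (p : Finset α → EReal) : Prop :=
  ∀ X Y : Finset α, p X + p Y ≤ p (X ∩ Y) + p (X ∪ Y)

/-- `p` takes values in `ℤ ∪ {−∞}`. -/
def IntegerValued (p : Finset α → EReal) : Prop :=
  ∀ X : Finset α, p X = ⊥ ∨ ∃ n : ℤ, p X = ((n : ℝ) : EReal)

/-- `x` belongs to the base-polyhedron `B'(p)`:
`x(S) = p(S)` and `x(Z) ≥ p(Z)` for every `Z ⊆ S`. -/
def memB (p : Finset α → EReal) (x : α → ℝ) : Prop :=
  ((∑ s, x s : ℝ) : EReal) = p Finset.univ ∧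
    ∀ Z : Finset α, p Z ≤ ((∑ s ∈ Z, x s : ℝ) : EReal)

/-- `x` is an integral element of the base-polyhedron `B'(p)` (a member of the
M-convex set `B ∩ ℤ^S`). -/
def memBZ (p : Finset α → EReal) (x : α → ℤ) : Prop :=
  ((((∑ s, x s : ℤ) : ℝ)) : EReal) = p Finset.univ ∧
    ∀ Z : Finset α, p Z ≤ ((((∑ s ∈ Z, x s : ℤ) : ℝ)) : EReal)

/-- Lexicographic comparison `l1 ≤_lex l2` of lists. -/
def lexLE {β : Type*} [LT β] (l1 l2 : List β) : Prop :=
  l1 = l2 ∨ List.Lex (· < ·) l1 l2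

/-- The components of `x` sorted in decreasing order. -/
noncomputable def sortDescR (x : α → ℝ) : List ℝ :=
  (Multiset.sort (Finset.univ.val.map x) (· ≤ ·)).reverse

/-- The components of the integral vector `x` sorted in decreasing order. -/
def sortDescZ (x : α → ℤ) : List ℤ :=
  (Multiset.sort (Finset.univ.val.map x) (· ≤ ·)).reverse

/-- `m` is a decreasingly minimal element of the base-polyhedron `B'(p)`. -/
def DecMinR (p : Finset α → EReal) (m : α → ℝ) : Prop :=
  memB p m ∧ ∀ y : α → ℝ, memB p y → lexLE (sortDescR m) (sortDescR y)

/-- `m` is a decreasingly minimal element of the M-convex set `B'(p) ∩ ℤ^S`. -/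
def DecMinZ (p : Finset α → EReal) (m : α → ℤ) : Prop :=
  memBZ p m ∧ ∀ y : α → ℤ, memBZ p y → lexLE (sortDescZ m) (sortDescZ y)

/-- The piecewise-linear extension of `k ↦ k²`:
`φ̄(ξ) = (2k+1)|ξ| − k(k+1)` with `k = ⌊|ξ|⌋`. -/
noncomputable def phibar (ξ : ℝ) : ℝ :=
  (2 * (⌊|ξ|⌋ : ℝ) + 1) * |ξ| - (⌊|ξ|⌋ : ℝ) * ((⌊|ξ|⌋ : ℝ) + 1)

/-- `W̄(x) = Σ_{s∈S} φ̄(x(s))`. -/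
noncomputable def Wbar {α : Type*} [Fintype α] (x : α → ℝ) : ℝ :=
  ∑ s, phibar (x s)

/-!
On the box `⌊x_ℝ⌋ ≤ x ≤ ⌈x_ℝ⌉` each `φ̄(x t)` is affine with slope `2⌊x_ℝ t⌋ + 1`, so `W̄` is
affine there. We round `x_ℝ` inside `B ∩ box` without increasing `W̄`. Take a fractional
coordinate `s` of largest slope. The smallest tight set `dep(x, s)` has integral value, so it
contains a second fractional coordinate `u`, and some mass can be moved from `s` to `u` within
`B`; by the choice of `s` this does not increase `W̄`. Moving as much as possible either makes
`s` or `u` integral, or creates a tight set containing `s` but not `u`, which shrinks `dep(x, s)`.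
The integral point reached minimizes `W̄` over `B`, and there `W̄` is the square-sum.
-/

lemma phibar_eq_sq_add_fract_mul (ξ : ℝ) :
    phibar ξ = ξ ^ 2 + Int.fract ξ * (1 - Int.fract ξ) := by
  have habs : phibar ξ = |ξ| ^ 2 + Int.fract |ξ| * (1 - Int.fract |ξ|) := by
    rw [phibar, Int.fract]; ring
  rw [habs, sq_abs]
  rcases abs_choice ξ with h | h
  · rw [h]
  · by_cases hξ : Int.fract ξ = 0
    · rw [h, hξ, Int.fract_neg_eq_zero.2 hξ]
    · rw [h, Int.fract_neg hξ]; ring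

lemma phibar_intCast (n : ℤ) : phibar n = (n : ℝ) ^ 2 := by
  simp [phibar_eq_sq_add_fract_mul]

lemma phibar_eq_of_mem_Icc {m : ℤ} {ξ : ℝ} (h₁ : (m : ℝ) ≤ ξ) (h₂ : ξ ≤ m + 1) :
    phibar ξ = (2 * m + 1) * ξ - m * (m + 1) := by
  have hfract : Int.fract ξ * (1 - Int.fract ξ) = (ξ - m) * (m + 1 - ξ) := by
    rcases h₂.lt_or_eq with h₂ | rfl
    · rw [Int.fract, Int.floor_eq_iff.2 ⟨h₁, h₂⟩]; ring
    · rw [show (m : ℝ) + 1 = ((m + 1 : ℤ) : ℝ) by push_cast; ring, Int.fract_intCast]; ring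
  rw [phibar_eq_sq_add_fract_mul, hfract]; ring

omit [DecidableEq α] in
lemma Wbar_intCast (z : α → ℤ) : Wbar (fun t => (z t : ℝ)) = ∑ t, (z t : ℝ) ^ 2 :=
  Finset.sum_congr rfl fun t _ => phibar_intCast (z t)

lemma EReal.eq_coe_of_add_le {c d : EReal} {a b : ℝ} (hc : c ≤ a) (hd : d ≤ b)
    (h : (a : EReal) + b ≤ c + d) : c = a := by
  induction c <;> induction d <;> simp_all
  norm_cast at h
  linarith

section BasePolyhedron

variable {p : Finset α → EReal} {x : α → ℝ} {s t u : α} {δ : ℝ}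

omit [DecidableEq α] in
lemma memB_intCast_iff {z : α → ℤ} :
    memB p (fun t => (z t : ℝ)) ↔ memBZ p z := by
  simp [memB, memBZ]

def IsTight (p : Finset α → EReal) (x : α → ℝ) (Z : Finset α) : Prop :=
  p Z = ((∑ t ∈ Z, x t : ℝ) : EReal)

omit [DecidableEq α] in
lemma memB.coe_toReal (hx : memB p x) {Z : Finset α} (hZ : p Z ≠ ⊥) :
    (((p Z).toReal : ℝ) : EReal) = p Z :=
  EReal.coe_toReal (ne_top_of_le_ne_top (EReal.coe_ne_top _) (hx.2 Z)) hZ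

lemma IsTight.inter (hsup : Supermodular p) (hx : memB p x) {X Y : Finset α}
    (hX : IsTight p x X) (hY : IsTight p x Y) : IsTight p x (X ∩ Y) := by
  refine EReal.eq_coe_of_add_le (hx.2 _) (hx.2 (X ∪ Y)) ?_
  calc ((∑ t ∈ X ∩ Y, x t : ℝ) : EReal) + ((∑ t ∈ X ∪ Y, x t : ℝ) : EReal)
      = p X + p Y := by
        rw [hX, hY, ← EReal.coe_add, ← EReal.coe_add, add_comm, Finset.sum_union_inter]
    _ ≤ p (X ∩ Y) + p (X ∪ Y) := hsup X Y

open Classical in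
/-- The smallest tight set containing `s`, written `dep(x, s)` in the literature. -/
noncomputable def dep (p : Finset α → EReal) (x : α → ℝ) (s : α) : Finset α :=
  (univ.filter fun Z => IsTight p x Z ∧ s ∈ Z).inf id

open Classical in
lemma isTight_dep (hsup : Supermodular p) (hx : memB p x) (s : α) :
    IsTight p x (dep p x s) ∧ s ∈ dep p x s :=
  Finset.inf_induction (p := fun Z => IsTight p x Z ∧ s ∈ Z) ⟨hx.1.symm, mem_univ s⟩
    (fun _ h₁ _ h₂ => ⟨h₁.1.inter hsup hx h₂.1, mem_inter.2 ⟨h₁.2, h₂.2⟩⟩)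
    (fun _ hZ => (mem_filter.1 hZ).2)

open Classical in
lemma dep_subset {Z : Finset α} (hZ : IsTight p x Z) (hs : s ∈ Z) :
    dep p x s ⊆ Z :=
  Finset.inf_le (f := id) (mem_filter.2 ⟨mem_univ Z, hZ, hs⟩)

def transfer (x : α → ℝ) (s u : α) (δ : ℝ) : α → ℝ :=
  x - Pi.single s δ + Pi.single u δ

omit [Fintype α] in
lemma transfer_apply_left (hsu : s ≠ u) : transfer x s u δ s = x s - δ := by
  simp [transfer, hsu]

omit [Fintype α] in
lemma transfer_apply_right (hsu : s ≠ u) : transfer x s u δ u = x u + δ := by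
  simp [transfer, hsu.symm]

omit [Fintype α] in
lemma transfer_apply_of_ne (hts : t ≠ s) (htu : t ≠ u) : transfer x s u δ t = x t := by
  simp [transfer, hts, htu]

omit [Fintype α] in
lemma sum_transfer (Z : Finset α) :
    ∑ t ∈ Z, transfer x s u δ t =
      ∑ t ∈ Z, x t - (if s ∈ Z then δ else 0) + (if u ∈ Z then δ else 0) := by
  simp [transfer, Finset.sum_add_distrib, Finset.sum_sub_distrib, Finset.sum_pi_single']

omit [Fintype α] in
lemma isTight_transfer_iff {Z : Finset α} (hs : s ∈ Z) (hu : u ∈ Z) :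
    IsTight p (transfer x s u δ) Z ↔ IsTight p x Z := by
  simp [IsTight, sum_transfer, hs, hu]

lemma memB_transfer (hx : memB p x) (hδ : 0 ≤ δ)
    (hcap : ∀ Z, s ∈ Z → u ∉ Z → p Z ≤ ((∑ t ∈ Z, x t - δ : ℝ) : EReal)) :
    memB p (transfer x s u δ) := by
  refine ⟨by simpa [sum_transfer] using hx.1, fun Z => ?_⟩
  rw [sum_transfer]
  by_cases hs : s ∈ Z <;> by_cases hu : u ∈ Z
  · rw [if_pos hs, if_pos hu, sub_add_cancel]; exact hx.2 Z
  · rw [if_pos hs, if_neg hu, add_zero]; exact hcap Z hs hu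
  · rw [if_neg hs, if_pos hu, sub_zero]
    exact (hx.2 Z).trans (EReal.coe_le_coe_iff.2 (by linarith))
  · rw [if_neg hs, if_neg hu, sub_zero, add_zero]; exact hx.2 Z

lemma exists_transfer (hx : memB p x)
    (hsep : ∀ Z, s ∈ Z → u ∉ Z → ¬ IsTight p x Z) {ε : ℝ} (hε : 0 < ε) :
    ∃ δ, 0 < δ ∧ δ ≤ ε ∧ memB p (transfer x s u δ) ∧
      (δ = ε ∨ ∃ Z, IsTight p (transfer x s u δ) Z ∧ s ∈ Z ∧ u ∉ Z) := by
  set G := univ.filter fun Z : Finset α => s ∈ Z ∧ u ∉ Z ∧ p Z ≠ ⊥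
  set slack : Finset α → ℝ := fun Z => ∑ t ∈ Z, x t - (p Z).toReal
  have hslack : ∀ Z ∈ G, 0 < slack Z := by
    intro Z hZ
    obtain ⟨hs, hu, hbot⟩ := (mem_filter.1 hZ).2
    have hlt := lt_of_le_of_ne (hx.2 Z) (hsep Z hs hu)
    rw [← hx.coe_toReal hbot, EReal.coe_lt_coe_iff] at hlt
    exact sub_pos.2 hlt
  have hne : (insert ε (G.image slack)).Nonempty := insert_nonempty _ _
  set δ := (insert ε (G.image slack)).min' hne
  have hδslack : ∀ Z ∈ G, δ ≤ slack Z :=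
    fun Z hZ => min'_le _ _ (mem_insert_of_mem (mem_image_of_mem _ hZ))
  have hδ : 0 < δ := by
    simp only [δ, lt_min'_iff, mem_insert, mem_image]
    rintro _ (rfl | ⟨Z, hZ, rfl⟩)
    exacts [hε, hslack Z hZ]
  have hcap : ∀ Z, s ∈ Z → u ∉ Z → p Z ≤ ((∑ t ∈ Z, x t - δ : ℝ) : EReal) := by
    intro Z hs hu
    by_cases hbot : p Z = ⊥
    · simp [hbot]
    · have := hδslack Z (mem_filter.2 ⟨mem_univ Z, hs, hu, hbot⟩)
      rw [← hx.coe_toReal hbot, EReal.coe_le_coe_iff]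
      linarith
  refine ⟨δ, hδ, min'_le _ _ (mem_insert_self _ _), memB_transfer hx hδ.le hcap, ?_⟩
  rcases mem_insert.1 (min'_mem _ hne) with h | h
  · exact Or.inl h
  · obtain ⟨Z, hZ, hδZ⟩ := mem_image.1 h
    obtain ⟨hs, hu, hbot⟩ := (mem_filter.1 hZ).2
    have hδZ : δ = slack Z := hδZ.symm
    refine Or.inr ⟨Z, ?_, hs, hu⟩
    rw [IsTight, sum_transfer, if_pos hs, if_neg hu, ← hx.coe_toReal hbot, hδZ]
    simp [slack]

end BasePolyhedron

section Rounding

variable {p : Finset α → EReal} {xR x : α → ℝ} {s t u : α} {δ : ℝ}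

noncomputable def fracSet (x : α → ℝ) : Finset α :=
  univ.filter fun t => Int.fract (x t) ≠ 0

omit [DecidableEq α] in
lemma mem_fracSet : s ∈ fracSet x ↔ Int.fract (x s) ≠ 0 := by
  simp [fracSet]

def roundingBox (xR : α → ℝ) : Set (α → ℝ) :=
  Set.Icc (fun t => (⌊xR t⌋ : ℝ)) (fun t => (⌈xR t⌉ : ℝ))

omit [Fintype α] [DecidableEq α] in
lemma self_mem_roundingBox (xR : α → ℝ) : xR ∈ roundingBox xR :=
  ⟨fun _ => Int.floor_le _, fun _ => Int.le_ceil _⟩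

omit [DecidableEq α] in
lemma Wbar_eq_of_mem_roundingBox (hx : x ∈ roundingBox xR) :
    Wbar x = ∑ t, ((2 * ⌊xR t⌋ + 1) * x t - ⌊xR t⌋ * (⌊xR t⌋ + 1)) := by
  refine Finset.sum_congr rfl fun t _ => phibar_eq_of_mem_Icc (hx.1 t) ((hx.2 t).trans ?_)
  dsimp only
  exact_mod_cast Int.ceil_le_floor_add_one (xR t)

lemma Wbar_transfer (hx : x ∈ roundingBox xR) (hx' : transfer x s u δ ∈ roundingBox xR) :
    Wbar (transfer x s u δ) = Wbar x + 2 * (⌊xR u⌋ - ⌊xR s⌋) * δ := by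
  rw [Wbar_eq_of_mem_roundingBox hx, Wbar_eq_of_mem_roundingBox hx']
  simp only [transfer, Pi.add_apply, Pi.sub_apply, Pi.single_apply, mul_add, mul_sub, mul_ite,
    mul_zero, sum_sub_distrib, sum_add_distrib, sum_ite_eq', mem_univ, ↓reduceIte]
  ring

lemma transfer_mem_roundingBox (hx : x ∈ roundingBox xR) (hsu : s ≠ u) (hu : u ∈ fracSet x)
    (hδ : 0 ≤ δ) (hδs : δ ≤ Int.fract (x s)) (hδu : δ ≤ 1 - Int.fract (x u)) :
    transfer x s u δ ∈ roundingBox xR := by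
  have hs_lo : (⌊xR s⌋ : ℝ) ≤ x s - δ := by
    have : (⌊xR s⌋ : ℝ) ≤ ⌊x s⌋ := by exact_mod_cast Int.le_floor.2 (hx.1 s)
    linarith [Int.self_sub_fract (x s)]
  have hu_hi : x u + δ ≤ ⌈xR u⌉ := by
    have hlt : x u < ⌈xR u⌉ :=
      (hx.2 u).lt_of_ne fun h => mem_fracSet.1 hu (h ▸ Int.fract_intCast _)
    have : (⌊x u⌋ : ℝ) + 1 ≤ ⌈xR u⌉ := by exact_mod_cast Int.floor_lt.2 hlt
    linarith [Int.self_sub_fract (x u)]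
  refine ⟨fun t => ?_, fun t => ?_⟩ <;> dsimp only
  · rcases eq_or_ne t s with rfl | hts
    · rwa [transfer_apply_left hsu]
    rcases eq_or_ne t u with rfl | htu
    · rw [transfer_apply_right hsu]; linarith [hx.1 t]
    · rw [transfer_apply_of_ne hts htu]; exact hx.1 t
  · rcases eq_or_ne t s with rfl | hts
    · rw [transfer_apply_left hsu]; linarith [hx.2 t]
    rcases eq_or_ne t u with rfl | htu
    · rwa [transfer_apply_right hsu]
    · rw [transfer_apply_of_ne hts htu]; exact hx.2 t

lemma fracSet_transfer_subset (hs : s ∈ fracSet x) (hu : u ∈ fracSet x) :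
    fracSet (transfer x s u δ) ⊆ fracSet x := by
  intro t ht
  rcases eq_or_ne t s with rfl | hts
  · exact hs
  rcases eq_or_ne t u with rfl | htu
  · exact hu
  rwa [mem_fracSet, transfer_apply_of_ne hts htu, ← mem_fracSet] at ht

lemma exists_mem_fracSet_ne_of_isTight (hint : IntegerValued p) {W : Finset α}
    (hW : IsTight p x W) (hsW : s ∈ W) (hs : s ∈ fracSet x) :
    ∃ u ∈ W, u ≠ s ∧ u ∈ fracSet x := by
  by_contra! hint'
  obtain ⟨n, hn⟩ := (hint W).resolve_left (hW ▸ EReal.coe_ne_bot _)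
  have hWn : ∑ t ∈ W, x t = n := by exact_mod_cast hW.symm.trans hn
  have hrest : ∑ t ∈ W.erase s, x t = ((∑ t ∈ W.erase s, ⌊x t⌋ : ℤ) : ℝ) := by
    push_cast
    refine Finset.sum_congr rfl fun t ht => ?_
    have := hint' t (mem_of_mem_erase ht) (ne_of_mem_erase ht)
    rw [mem_fracSet, not_not] at this
    linarith [Int.self_sub_fract (x t)]
  have hxs : x s = ((n - ∑ t ∈ W.erase s, ⌊x t⌋ : ℤ) : ℝ) := by
    rw [Int.cast_sub, ← hWn, ← hrest, ← Finset.add_sum_erase W x hsW]; ring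
  exact mem_fracSet.1 hs (hxs ▸ Int.fract_intCast _)

lemma transfer_mem_fracSet_left (hsu : s ≠ u) (hδ : 0 ≤ δ)
    (hδs : δ < Int.fract (x s)) : s ∈ fracSet (transfer x s u δ) := by
  have : Int.fract (x s - δ) = Int.fract (x s) - δ :=
    Int.fract_eq_iff.2 ⟨by linarith, by linarith [Int.fract_lt_one (x s)],
      ⌊x s⌋, by linarith [Int.self_sub_fract (x s)]⟩
  rw [mem_fracSet, transfer_apply_left hsu, this]
  linarith

lemma exists_not_mem_fracSet_transfer (hsu : s ≠ u) :
    s ∉ fracSet (transfer x s u (min (Int.fract (x s)) (1 - Int.fract (x u)))) ∨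
      u ∉ fracSet (transfer x s u (min (Int.fract (x s)) (1 - Int.fract (x u)))) := by
  simp only [mem_fracSet, not_not, transfer_apply_left hsu, transfer_apply_right hsu]
  rcases min_choice (Int.fract (x s)) (1 - Int.fract (x u)) with h | h <;> rw [h]
  · left
    rw [Int.self_sub_fract, Int.fract_intCast]
  · right
    rw [show x u + (1 - Int.fract (x u)) = ((⌊x u⌋ + 1 : ℤ) : ℝ) by
      push_cast; linarith [Int.self_sub_fract (x u)], Int.fract_intCast]

lemma exists_fracSet_ssubset (hsup : Supermodular p) (hint : IntegerValued p)
    (hx : memB p x) (hbox : x ∈ roundingBox xR) (hs : s ∈ fracSet x)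
    (hmax : ∀ t ∈ fracSet x, ⌊xR t⌋ ≤ ⌊xR s⌋) :
    ∃ x', memB p x' ∧ x' ∈ roundingBox xR ∧ Wbar x' ≤ Wbar x ∧ fracSet x' ⊂ fracSet x := by
  induction hn : (dep p x s).card using Nat.strong_induction_on generalizing x with
  | _ n ih =>
  obtain ⟨hdep, hsdep⟩ := isTight_dep hsup hx s
  obtain ⟨u, hudep, hus, hu⟩ := exists_mem_fracSet_ne_of_isTight hint hdep hsdep hs
  have hsu := hus.symm
  set ε := min (Int.fract (x s)) (1 - Int.fract (x u))
  have hε : 0 < ε := lt_min ((Int.fract_nonneg _).lt_of_ne' (mem_fracSet.1 hs))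
    (by linarith [Int.fract_lt_one (x u)])
  obtain ⟨δ, hδ, hδε, hx', htight⟩ :=
    exists_transfer hx (fun Z hsZ huZ hZ => huZ (dep_subset hZ hsZ hudep)) hε
  have hbox' := transfer_mem_roundingBox hbox hsu hu hδ.le
    (hδε.trans (min_le_left _ _)) (hδε.trans (min_le_right _ _))
  have hW : Wbar (transfer x s u δ) ≤ Wbar x := by
    have hslope : (⌊xR u⌋ : ℝ) ≤ ⌊xR s⌋ := by exact_mod_cast hmax u hu
    rw [Wbar_transfer hbox hbox']
    nlinarith
  have hsub := fracSet_transfer_subset (δ := δ) hs hu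
  rcases hδε.lt_or_eq with hδε | rfl
  · obtain ⟨Z, hZ, hsZ, huZ⟩ := htight.resolve_left hδε.ne
    have hdep' : dep p (transfer x s u δ) s ⊂ dep p x s := by
      refine (Finset.ssubset_iff_of_subset ?_).2 ⟨u, hudep, fun h => huZ (dep_subset hZ hsZ h)⟩
      exact dep_subset ((isTight_transfer_iff hsdep hudep).2 hdep) hsdep
    obtain ⟨x'', hx'', hbox'', hW'', hsub''⟩ := ih _ (hn ▸ card_lt_card hdep') hx' hbox'
      (transfer_mem_fracSet_left hsu hδ.le (hδε.trans_le (min_le_left _ _)))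
      (fun t ht => hmax t (hsub ht)) rfl
    exact ⟨x'', hx'', hbox'', hW''.trans hW, hsub''.trans_subset hsub⟩
  · refine ⟨_, hx', hbox', hW, (Finset.ssubset_iff_of_subset hsub).2 ?_⟩
    rcases exists_not_mem_fracSet_transfer hsu with h | h
    exacts [⟨s, hs, h⟩, ⟨u, hu, h⟩]

lemma exists_intCast_mem_roundingBox (hsup : Supermodular p) (hint : IntegerValued p)
    (hxR : memB p xR) :
    ∃ z : α → ℤ, memB p (fun t => (z t : ℝ)) ∧ (fun t => (z t : ℝ)) ∈ roundingBox xR ∧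
      Wbar (fun t => (z t : ℝ)) ≤ Wbar xR := by
  obtain ⟨x, ⟨hx, hbox, hW⟩, hmin⟩ := (measure fun x : α → ℝ => (fracSet x).card).wf.has_min
    {x | memB p x ∧ x ∈ roundingBox xR ∧ Wbar x ≤ Wbar xR}
    ⟨xR, hxR, self_mem_roundingBox xR, le_rfl⟩
  have hfrac : fracSet x = ∅ := by
    by_contra hne
    obtain ⟨s, hs, hmax⟩ := exists_max_image (fracSet x) (fun t => ⌊xR t⌋)
      (nonempty_iff_ne_empty.2 hne)
    obtain ⟨x', hx', hbox', hW', hlt⟩ := exists_fracSet_ssubset hsup hint hx hbox hs hmax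
    exact hmin x' ⟨hx', hbox', hW'.trans hW⟩ (card_lt_card hlt)
  have hxz : (fun t => (⌊x t⌋ : ℝ)) = x := funext fun t => by
    have := Finset.eq_empty_iff_forall_notMem.1 hfrac t
    rw [mem_fracSet, not_not] at this
    linarith [Int.self_sub_fract (x t)]
  refine ⟨fun t => ⌊x t⌋, ?_⟩
  beta_reduce
  rw [hxz]
  exact ⟨hx, hbox, hW⟩

end Rounding

theorem Wbar_min_eq_integral_square_sum_min_general (p : Finset α → EReal)
    (hsup : Supermodular p)
    (hint : IntegerValued p) (xR : α → ℝ) (hxR : memB p xR)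
    (hmin : ∀ y : α → ℝ, memB p y → Wbar xR ≤ Wbar y) :
    (∀ z : α → ℤ, memBZ p z → Wbar xR ≤ ∑ s, ((z s : ℝ)) ^ 2) ∧
    ∃ xZ : α → ℤ, memBZ p xZ ∧
      (∀ s : α, ⌊xR s⌋ ≤ xZ s ∧ xZ s ≤ ⌈xR s⌉) ∧
      (∑ s, ((xZ s : ℝ)) ^ 2) = Wbar xR ∧
      (∀ y : α → ℝ, memB p y → Wbar (fun s => (xZ s : ℝ)) ≤ Wbar y) := by
  obtain ⟨z, hz, hbox, hW⟩ := exists_intCast_mem_roundingBox hsup hint hxR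
  have hWz : Wbar (fun t => (z t : ℝ)) = Wbar xR := hW.antisymm (hmin _ hz)
  refine ⟨fun z' hz' => Wbar_intCast z' ▸ hmin _ (memB_intCast_iff.2 hz'),
    z, memB_intCast_iff.1 hz, fun t => ⟨Int.cast_le.1 (hbox.1 t), Int.cast_le.1 (hbox.2 t)⟩,
    Wbar_intCast z ▸ hWz, fun y hy => hWz ▸ hmin y hy⟩

/-- The minimum of `W̄` over `B` equals the minimum square-sum over `B ∩ ℤ^S`;
moreover any minimizer `x_ℝ` of `W̄` over `B` admits an integral minimizer `x_ℤ`
of `W̄` over `B` with `⌊x_ℝ⌋ ≤ x_ℤ ≤ ⌈x_ℝ⌉`. -/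
theorem Wbar_min_eq_integral_square_sum_min (p : Finset α → EReal) (hp0 : p ∅ = 0)
    (hfin : p (Finset.univ : Finset α) ≠ ⊥) (hsup : Supermodular p)
    (hint : IntegerValued p) (xR : α → ℝ) (hxR : memB p xR)
    (hmin : ∀ y : α → ℝ, memB p y → Wbar xR ≤ Wbar y) :
    (∀ z : α → ℤ, memBZ p z → Wbar xR ≤ ∑ s, ((z s : ℝ)) ^ 2) ∧
    ∃ xZ : α → ℤ, memBZ p xZ ∧
      (∀ s : α, ⌊xR s⌋ ≤ xZ s ∧ xZ s ≤ ⌈xR s⌉) ∧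
      (∑ s, ((xZ s : ℝ)) ^ 2) = Wbar xR ∧
      (∀ y : α → ℝ, memB p y → Wbar (fun s => (xZ s : ℝ)) ≤ Wbar y) :=
  Wbar_min_eq_integral_square_sum_min_general p hsup hint xR hxR hmin
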